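/- arXiv:0808.2163 — 3 statements merged into one kernel-verified Lean document; each statement's English description precedes it below -/
import Mathlib

section
/- Pointwise identity underlying the relativistic IMS localisation formula: Let (M, μ) be a measure space and let g, h ∈ L²(μ) be real-valued with ∫ g(u)² dμ(u) = 1 and ∫ h(u)² dμ(u) = 1. Then for all complex numbers a, b: ∫_M |g(u) a − h(u) b|² dμ(u) = |a − b|² + (∫_M (g(u) − h(u))² dμ(u)) · Re(a · conj(b)). (Applied with g(u) = θ_u(x), h(u) = θ_u(y), a = f(x), b = f(y) for a family (θ_u) with ∫ θ_u(x)² dμ(u) = 1 for all x, this gives the relativistic IMS formula.) -/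
/-!
Expanding the square gives `‖g a - h b‖² = g² ‖a‖² + h² ‖b‖² - 2 g h ⟪a, b⟫`, and polarising
`2 g h = g² + h² - (g - h)²` leaves only the integrable functions `g²`, `h²`, `(g - h)²`.
With `∫ g² = ∫ h² = 1` the first two integrals reassemble `‖a - b‖²`.
-/

open MeasureTheory RealInnerProductSpace

section InnerProductSpace

variable {E : Type*} [NormedAddCommGroup E] [InnerProductSpace ℝ E]

theorem norm_smul_sub_smul_sq (x y : ℝ) (a b : E) :
    ‖x • a - y • b‖ ^ 2
      = x ^ 2 * (‖a‖ ^ 2 - ⟪a, b⟫) + y ^ 2 * (‖b‖ ^ 2 - ⟪a, b⟫) + (x - y) ^ 2 * ⟪a, b⟫ := by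
  rw [norm_sub_sq_real, norm_smul, norm_smul, mul_pow, mul_pow, Real.norm_eq_abs,
    Real.norm_eq_abs, sq_abs, sq_abs, real_inner_smul_left, real_inner_smul_right]
  ring

theorem integral_norm_smul_sub_smul_sq {M : Type*} [MeasurableSpace M] {μ : Measure M}
    {g h : M → ℝ} (hg : MemLp g 2 μ) (hh : MemLp h 2 μ) (a b : E) :
    ∫ u, ‖g u • a - h u • b‖ ^ 2 ∂μ
      = (∫ u, g u ^ 2 ∂μ) * (‖a‖ ^ 2 - ⟪a, b⟫) + (∫ u, h u ^ 2 ∂μ) * (‖b‖ ^ 2 - ⟪a, b⟫)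
        + (∫ u, (g u - h u) ^ 2 ∂μ) * ⟪a, b⟫ := by
  have hg2 : Integrable (fun u => g u ^ 2) μ := hg.integrable_sq
  have hh2 : Integrable (fun u => h u ^ 2) μ := hh.integrable_sq
  have hgh2 : Integrable (fun u => (g u - h u) ^ 2) μ := (hg.sub hh).integrable_sq
  simp only [norm_smul_sub_smul_sq]
  rw [integral_add (by exact (hg2.mul_const _).add (hh2.mul_const _)) (hgh2.mul_const _),
    integral_add (hg2.mul_const _) (hh2.mul_const _),
    integral_mul_const, integral_mul_const, integral_mul_const]

end InnerProductSpace

/-- Pointwise identity underlying the relativistic IMS localisation formula: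
if `g, h ∈ L²(μ)` are real-valued with `∫ g² dμ = 1 = ∫ h² dμ`, then for all `a b : ℂ`,
`∫ |g(u) a − h(u) b|² dμ(u) = |a − b|² + (∫ (g−h)² dμ) · Re(a · conj b)`. -/
theorem IMS_pointwise_identity {M : Type*} [MeasurableSpace M] (μ : Measure M)
    (g h : M → ℝ) (hg : MemLp g 2 μ) (hh : MemLp h 2 μ)
    (hg1 : ∫ u, (g u) ^ 2 ∂μ = 1) (hh1 : ∫ u, (h u) ^ 2 ∂μ = 1) (a b : ℂ) :
    ∫ u, ‖(g u : ℂ) * a - (h u : ℂ) * b‖ ^ 2 ∂μ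
      = ‖a - b‖ ^ 2 + (∫ u, (g u - h u) ^ 2 ∂μ) * (a * (starRingEnd ℂ) b).re := by
  have hinner : ⟪a, b⟫ = (a * (starRingEnd ℂ) b).re := by
    rw [real_inner_comm, Complex.inner]
  simp only [← Complex.real_smul]
  rw [integral_norm_smul_sub_smul_sq hg hh, hg1, hh1, norm_sub_sq_real, hinner]
  ring
end

section
/- Localisation error trace estimate: Define K₂(t) = t ∫_0^∞ e^{−t√(s²+1)} s² ds for t > 0. There exists a universal constant C > 0 such that for every m > 0, every ℓ > 0 and every measurable set Ω ⊆ ℝ³ of finite Lebesgue measure |Ω|: ∫_{ℝ³∖Ω} ∫_Ω 1_{\{|x−y| > ℓ\}} K₂(m|x−y|)² dy dx ≤ C m^{-4} ℓ^{-1} e^{−mℓ} |Ω|. -/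
open MeasureTheory

/-- The modified Bessel function of the second kind of order two,
`K₂(t) = t ∫_0^∞ e^{−t √(s²+1)} s² ds` for `t > 0`. -/
noncomputable def K2 (t : ℝ) : ℝ :=
  t * ∫ s in Set.Ioi (0 : ℝ), Real.exp (-(t * Real.sqrt (s ^ 2 + 1))) * s ^ 2

/-!
The elementary bound `√(s² + 1) ≥ (1 + s) / 2` reduces `K₂` to a Gamma integral and gives
`K₂(t) ≤ 16 t⁻² e^{-t/2}`, so on `|x - y| > ℓ` the integrand is at most
`256 m⁻⁴ e^{-mℓ} |x - y|⁻⁴`. For a nonnegative integrable kernel `k`, translation invariance of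
Lebesgue measure gives `∫_{Ωᶜ} ∫_Ω k(x - y) ≤ ‖k‖₁ |Ω|`, and in polar coordinates
`∫_{|z| > ℓ} |z|⁻⁴ dz = 3 |B₁| ℓ⁻¹`, the tail being integrable because `4 > 3`.
-/

open Set Metric Real Module
open scoped ENNReal

theorem integral_le_toReal_lintegral_ofReal {α : Type*} [MeasurableSpace α] {μ : Measure α}
    {f : α → ℝ} : ∫ a, f a ∂μ ≤ (∫⁻ a, ENNReal.ofReal (f a) ∂μ).toReal := by
  by_cases hf : Integrable f μ
  · rw [integral_eq_lintegral_pos_part_sub_lintegral_neg_part hf]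
    exact sub_le_self _ ENNReal.toReal_nonneg
  · rw [integral_undef hf]
    exact ENNReal.toReal_nonneg

section DifferenceKernel

variable {G : Type*} [MeasurableSpace G] [AddGroup G] [MeasurableAdd₂ G] [MeasurableNeg G]
  {μ : Measure G} [SFinite μ] [μ.IsAddRightInvariant]

theorem setIntegral_setIntegral_sub_le {g : G → ℝ} (hg_meas : Measurable g) (hg_nonneg : 0 ≤ g)
    (hg_int : Integrable g μ) (s t : Set G) (ht : μ t ≠ ∞) :
    ∫ x in s, ∫ y in t, g (x - y) ∂μ ∂μ ≤ (∫ z, g z ∂μ) * μ.real t := by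
  have hg_sub : Measurable fun p : G × G => ENNReal.ofReal (g (p.1 - p.2)) :=
    (hg_meas.comp (measurable_fst.sub measurable_snd)).ennreal_ofReal
  have hlintegral : ∫⁻ x in s, ∫⁻ y in t, ENNReal.ofReal (g (x - y)) ∂μ ∂μ
      ≤ ENNReal.ofReal (∫ z, g z ∂μ) * μ t :=
    calc _ ≤ ∫⁻ x, ∫⁻ y in t, ENNReal.ofReal (g (x - y)) ∂μ ∂μ := setLIntegral_le_lintegral _ _
      _ = ∫⁻ y in t, ∫⁻ x, ENNReal.ofReal (g (x - y)) ∂μ ∂μ :=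
          lintegral_lintegral_swap hg_sub.aemeasurable
      _ = ∫⁻ _ in t, ∫⁻ z, ENNReal.ofReal (g z) ∂μ ∂μ := by
          congr with y
          exact lintegral_sub_right_eq_self (fun z => ENNReal.ofReal (g z)) y
      _ = _ := by
          rw [setLIntegral_const,
            ofReal_integral_eq_lintegral_ofReal hg_int (ae_of_all _ hg_nonneg)]
  calc ∫ x in s, ∫ y in t, g (x - y) ∂μ ∂μ
      ≤ (∫⁻ x in s, ENNReal.ofReal (∫ y in t, g (x - y) ∂μ) ∂μ).toReal :=
        integral_le_toReal_lintegral_ofReal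
    _ ≤ (∫⁻ x in s, ∫⁻ y in t, ENNReal.ofReal (g (x - y)) ∂μ ∂μ).toReal := by
        gcongr with x
        · exact (hlintegral.trans_lt (by finiteness)).ne
        · exact ENNReal.ofReal_le_of_le_toReal integral_le_toReal_lintegral_ofReal
    _ ≤ (∫ z, g z ∂μ) * μ.real t := by
        grw [hlintegral, ENNReal.toReal_mul, ENNReal.toReal_ofReal (integral_nonneg hg_nonneg)]
        · rfl
        · finiteness

end DifferenceKernel

theorem pow_mul_ite_rpow_neg_eq_indicator {p ℓ : ℝ} {n : ℕ} (hn : 1 ≤ n) {y : ℝ} (hy : y ∈ Ioi 0) :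
    y ^ (n - 1) • (if ℓ < y then y ^ (-p) else 0) = (Ioi ℓ).indicator (· ^ (n - 1 - p : ℝ)) y := by
  rw [mem_Ioi] at hy
  by_cases hyℓ : ℓ < y
  · rw [if_pos hyℓ, indicator_of_mem (mem_Ioi.2 hyℓ), smul_eq_mul, ← rpow_natCast,
      Nat.cast_sub hn, Nat.cast_one, ← rpow_add hy, ← sub_eq_add_neg]
  · simp [hyℓ]

section RadialTail

variable {E : Type*} [NormedAddCommGroup E] [NormedSpace ℝ E] [FiniteDimensional ℝ E]
  [MeasurableSpace E] [BorelSpace E] [Nontrivial E] (μ : Measure E) [μ.IsAddHaarMeasure]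
  {p ℓ : ℝ}

theorem integrable_ite_norm_rpow_neg (hp : finrank ℝ E < p) (hℓ : 0 < ℓ) :
    Integrable (fun z : E => if ℓ < ‖z‖ then ‖z‖ ^ (-p) else 0) μ := by
  have hn : 1 ≤ finrank ℝ E := finrank_pos
  rw [integrable_fun_norm_addHaar μ (f := fun r => if ℓ < r then r ^ (-p) else 0),
    integrableOn_congr_fun (fun y hy => pow_mul_ite_rpow_neg_eq_indicator hn hy) measurableSet_Ioi,
    IntegrableOn, integrable_indicator_iff measurableSet_Ioi, IntegrableOn,
    Measure.restrict_restrict measurableSet_Ioi,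
    Ioi_inter_Ioi, sup_of_le_left hℓ.le]
  exact integrableOn_Ioi_rpow_of_lt (by linarith) hℓ

theorem integral_ite_norm_rpow_neg (hp : finrank ℝ E < p) (hℓ : 0 < ℓ) :
    ∫ z : E, (if ℓ < ‖z‖ then ‖z‖ ^ (-p) else 0) ∂μ
      = finrank ℝ E * μ.real (ball 0 1) * ℓ ^ (finrank ℝ E - p) / (p - finrank ℝ E) := by
  have hn : 1 ≤ finrank ℝ E := finrank_pos
  rw [integral_fun_norm_addHaar μ (fun r => if ℓ < r then r ^ (-p) else 0),
    setIntegral_congr_fun measurableSet_Ioi (fun y hy => pow_mul_ite_rpow_neg_eq_indicator hn hy),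
    integral_indicator measurableSet_Ioi, Measure.restrict_restrict measurableSet_Ioi,
    Ioi_inter_Ioi, sup_of_le_left hℓ.le, integral_Ioi_rpow_of_lt (by linarith) hℓ]
  rw [nsmul_eq_mul, smul_eq_mul, show (finrank ℝ E : ℝ) - 1 - p + 1 = finrank ℝ E - p by ring,
    neg_div, ← div_neg, neg_sub]
  ring

end RadialTail

theorem integrableOn_sq_mul_exp_neg_mul {b : ℝ} (hb : 0 < b) :
    IntegrableOn (fun s : ℝ => s ^ 2 * exp (-(b * s))) (Ioi 0) := by
  refine (integrableOn_rpow_mul_exp_neg_mul_rpow (p := 1) (s := 2) (by norm_num) one_pos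
    hb).congr_fun (fun s _ => ?_) measurableSet_Ioi
  simp only [rpow_one, rpow_two, neg_mul]

theorem integral_sq_mul_exp_neg_mul {b : ℝ} (hb : 0 < b) :
    ∫ s in Ioi (0 : ℝ), s ^ 2 * exp (-(b * s)) = 2 / b ^ 3 := by
  have hΓ : Gamma 3 = 2 := by
    rw [show (3 : ℝ) = (2 : ℕ) + 1 by norm_num, Gamma_nat_eq_factorial]
    norm_num
  have h := integral_rpow_mul_exp_neg_mul_Ioi (a := 3) three_pos hb
  rw [show (3 : ℝ) - 1 = (2 : ℕ) by norm_num, show (3 : ℝ) = (3 : ℕ) by norm_num] at h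
  simp only [rpow_natCast] at h
  rw [h, Nat.cast_ofNat, hΓ]
  field_simp

theorem one_add_div_two_le_sqrt_sq_add_one (s : ℝ) : (1 + s) / 2 ≤ √(s ^ 2 + 1) :=
  le_sqrt_of_sq_le (by nlinarith [sq_nonneg (s - 1), sq_nonneg s])

theorem K2_nonneg {t : ℝ} (ht : 0 ≤ t) : 0 ≤ K2 t :=
  mul_nonneg ht (setIntegral_nonneg measurableSet_Ioi fun s _ => by positivity)

theorem measurable_K2 : Measurable K2 := by
  have hc : Continuous fun p : ℝ × ℝ => exp (-(p.1 * √(p.2 ^ 2 + 1))) * p.2 ^ 2 := by fun_prop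
  exact measurable_id.mul
    (hc.stronglyMeasurable.integral_prod_right' (ν := volume.restrict (Ioi 0))).measurable

theorem K2_le {t : ℝ} (ht : 0 < t) : K2 t ≤ 16 * t⁻¹ ^ 2 * exp (-(t / 2)) := by
  have hint : ∫ s in Ioi (0 : ℝ), exp (-(t * √(s ^ 2 + 1))) * s ^ 2
      ≤ ∫ s in Ioi (0 : ℝ), exp (-(t / 2)) * (s ^ 2 * exp (-(t / 2 * s))) := by
    refine setIntegral_mono_of_nonneg (fun s _ => by positivity) (fun s _ => ?_)
      ((integrableOn_sq_mul_exp_neg_mul (half_pos ht)).const_mul _)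
    calc exp (-(t * √(s ^ 2 + 1))) * s ^ 2 ≤ exp (-(t * ((1 + s) / 2))) * s ^ 2 := by
          gcongr
          exact one_add_div_two_le_sqrt_sq_add_one s
      _ = exp (-(t / 2)) * (s ^ 2 * exp (-(t / 2 * s))) := by
          rw [show -(t * ((1 + s) / 2)) = -(t / 2) + -(t / 2 * s) by ring, exp_add]
          ring
  rw [integral_const_mul, integral_sq_mul_exp_neg_mul (half_pos ht)] at hint
  calc K2 t ≤ t * (exp (-(t / 2)) * (2 / (t / 2) ^ 3)) := mul_le_mul_of_nonneg_left hint ht.le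
    _ = 16 * t⁻¹ ^ 2 * exp (-(t / 2)) := by
        field_simp
        ring

theorem K2_sq_le_of_lt {m ℓ r : ℝ} (hm : 0 < m) (hℓ : 0 < ℓ) (hr : ℓ < r) :
    K2 (m * r) ^ 2 ≤ 256 * m⁻¹ ^ 4 * exp (-(m * ℓ)) * r ^ (-4 : ℝ) := by
  have hr₀ : 0 < r := hℓ.trans hr
  have hmr : 0 < m * r := by positivity
  calc K2 (m * r) ^ 2 ≤ (16 * (m * r)⁻¹ ^ 2 * exp (-(m * r / 2))) ^ 2 := by
        gcongr
        · exact K2_nonneg hmr.le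
        · exact K2_le hmr
    _ = 256 * m⁻¹ ^ 4 * exp (-(m * r)) * r ^ (-4 : ℝ) := by
        rw [rpow_neg hr₀.le, show (4 : ℝ) = (4 : ℕ) by norm_num, rpow_natCast, mul_pow, mul_pow,
          ← exp_nat_mul, mul_inv]
        ring_nf
    _ ≤ 256 * m⁻¹ ^ 4 * exp (-(m * ℓ)) * r ^ (-4 : ℝ) := by gcongr

section LocalisationKernel

local notation "ℝ³" => EuclideanSpace ℝ (Fin 3)

variable {m ℓ : ℝ}

theorem ite_K2_sq_le (hm : 0 < m) (hℓ : 0 < ℓ) (r : ℝ) :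
    (if ℓ < r then K2 (m * r) ^ 2 else 0)
      ≤ 256 * m⁻¹ ^ 4 * exp (-(m * ℓ)) * (if ℓ < r then r ^ (-4 : ℝ) else 0) := by
  by_cases hr : ℓ < r
  · simpa only [if_pos hr, mul_assoc] using K2_sq_le_of_lt hm hℓ hr
  · simp [hr]

theorem measurable_ite_K2_sq (m ℓ : ℝ) :
    Measurable fun z : ℝ³ => if ℓ < ‖z‖ then K2 (m * ‖z‖) ^ 2 else 0 :=
  Measurable.ite (measurableSet_lt measurable_const measurable_norm)
    ((measurable_K2.comp (measurable_const.mul measurable_norm)).pow_const 2) measurable_const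

theorem integrable_ite_K2_sq (hm : 0 < m) (hℓ : 0 < ℓ) :
    Integrable (fun z : ℝ³ => if ℓ < ‖z‖ then K2 (m * ‖z‖) ^ 2 else 0) := by
  have hp : (finrank ℝ ℝ³ : ℝ) < 4 := by norm_num [finrank_euclideanSpace_fin]
  refine ((integrable_ite_norm_rpow_neg volume hp hℓ).const_mul
    (256 * m⁻¹ ^ 4 * exp (-(m * ℓ)))).mono' (measurable_ite_K2_sq m ℓ).aestronglyMeasurable
    (ae_of_all _ fun z => ?_)
  rw [Real.norm_of_nonneg (by positivity)]
  exact ite_K2_sq_le hm hℓ ‖z‖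

theorem integral_ite_K2_sq_le (hm : 0 < m) (hℓ : 0 < ℓ) :
    ∫ z : ℝ³, (if ℓ < ‖z‖ then K2 (m * ‖z‖) ^ 2 else 0)
      ≤ 768 * volume.real (ball (0 : ℝ³) 1) * m⁻¹ ^ 4 * ℓ⁻¹ * exp (-(m * ℓ)) := by
  have hp : (finrank ℝ ℝ³ : ℝ) < 4 := by norm_num [finrank_euclideanSpace_fin]
  calc _ ≤ ∫ z : ℝ³, 256 * m⁻¹ ^ 4 * exp (-(m * ℓ)) * (if ℓ < ‖z‖ then ‖z‖ ^ (-4 : ℝ) else 0) :=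
        integral_mono (integrable_ite_K2_sq hm hℓ)
          ((integrable_ite_norm_rpow_neg volume hp hℓ).const_mul _) fun z => ite_K2_sq_le hm hℓ ‖z‖
    _ = _ := by
        rw [integral_const_mul, integral_ite_norm_rpow_neg volume hp hℓ, finrank_euclideanSpace_fin]
        norm_num [rpow_neg_one]
        ring

end LocalisationKernel

/-- Localisation error trace estimate: for every `m, ℓ > 0` and every measurable
`Ω ⊆ ℝ³` of finite measure,
`∫_{Ωᶜ} ∫_Ω 1_{|x−y|>ℓ} K₂(m|x−y|)² dy dx ≤ C m⁻⁴ ℓ⁻¹ e^{−mℓ} |Ω|`. -/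
theorem localisation_error_trace_estimate :
    ∃ C : ℝ, 0 < C ∧ ∀ (m ℓ : ℝ), 0 < m → 0 < ℓ →
      ∀ Ω : Set (EuclideanSpace ℝ (Fin 3)), MeasurableSet Ω → volume Ω < ⊤ →
        (∫ x in Ωᶜ, ∫ y in Ω, (if ℓ < ‖x - y‖ then K2 (m * ‖x - y‖) ^ 2 else 0))
          ≤ C * m⁻¹ ^ 4 * ℓ⁻¹ * Real.exp (-(m * ℓ)) * (volume Ω).toReal := by
  have hball : 0 < volume.real (ball (0 : EuclideanSpace ℝ (Fin 3)) 1) :=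
    ENNReal.toReal_pos (measure_ball_pos _ _ one_pos).ne' measure_ball_lt_top.ne
  refine ⟨768 * volume.real (ball (0 : EuclideanSpace ℝ (Fin 3)) 1), by positivity,
    fun m ℓ hm hℓ Ω _ hΩ => ?_⟩
  calc _ ≤ (∫ z, if ℓ < ‖z‖ then K2 (m * ‖z‖) ^ 2 else 0) * volume.real Ω :=
        setIntegral_setIntegral_sub_le (measurable_ite_K2_sq m ℓ) (fun z => by positivity)
          (integrable_ite_K2_sq hm hℓ) _ _ hΩ.ne
    _ ≤ _ := mul_le_mul_of_nonneg_right (integral_ite_K2_sq_le hm hℓ) measureReal_nonneg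
end

section
/- Comparison of relativistic and non-relativistic semi-classical integrands: There exists a constant C > 0 such that for all β > 0 and all a > 0, b > 0: ∫_{ℝ³} |[½|q|² − a]_- − [√(β^{-1}|q|² + β^{-2}) − β^{-1} − a − b]_-| dq ≤ C β (β(a+b)² + 2(a+b))^{7/2} + C b (β(a+b)² + 2(a+b))^{3/2}. -/
/-!
With `e(t) = √(t/β + 1/β²) - 1/β` the relativistic kinetic energy at `|q|² = t`, the expansion
`√(1 + x) = 1 + x/2 + O(x²)` gives `0 ≤ t/2 - e(t) ≤ β t²/8`. Both negative parts vanish once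
`t ≥ S := β(a+b)² + 2(a+b)`, because `e(S) = a + b`. So the integrand is supported in the ball of
radius `√S` and bounded there by `β S²/8 + b`; multiplying by the volume `|B₁| √S³` of that ball
gives the two terms.
-/

open MeasureTheory Metric

namespace Real

theorem one_add_div_two_sub_sq_div_eight_le_sqrt_one_add {x : ℝ} (hx : 0 ≤ x) :
    1 + x / 2 - x ^ 2 / 8 ≤ √(1 + x) := by
  set s := √(1 + x)
  have hs : s ^ 2 = 1 + x := sq_sqrt (by linarith)
  have hs1 : 1 ≤ s := one_le_sqrt.2 (by linarith)
  -- with `x = s² - 1`, the difference is `(s - 1)³ (s + 3) / 8`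
  have key : 0 ≤ (s - 1) ^ 3 * (s + 3) := by
    have := sub_nonneg.2 hs1
    positivity
  nlinarith

end Real

/-- With `β = c⁻²`, this is `√(c² t + c⁴) - c²`, the kinetic energy of a unit-mass relativistic
particle with `|q|² = t`. -/
noncomputable def relativisticKinetic (β t : ℝ) : ℝ :=
  Real.sqrt (t / β + 1 / β ^ 2) - 1 / β

section relativisticKinetic

variable {β t : ℝ}

theorem relativisticKinetic_eq (hβ : 0 < β) :
    relativisticKinetic β t = (√(1 + β * t) - 1) / β := by
  have : t / β + 1 / β ^ 2 = (1 + β * t) / β ^ 2 := by field_simp; ring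
  rw [relativisticKinetic, this, Real.sqrt_div' _ (sq_nonneg β), Real.sqrt_sq hβ.le, sub_div]

theorem relativisticKinetic_le_half (hβ : 0 < β) (ht : 0 ≤ t) :
    relativisticKinetic β t ≤ t / 2 := by
  have := Real.sqrt_one_add_le (x := β * t) (by nlinarith)
  rw [relativisticKinetic_eq hβ, div_le_iff₀ hβ]
  linarith

theorem half_sub_relativisticKinetic_le (hβ : 0 < β) (ht : 0 ≤ t) :
    t / 2 - relativisticKinetic β t ≤ β * t ^ 2 / 8 := by
  have := Real.one_add_div_two_sub_sq_div_eight_le_sqrt_one_add (x := β * t) (by positivity)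
  rw [relativisticKinetic_eq hβ, sub_le_comm, le_div_iff₀ hβ]
  nlinarith

theorem le_relativisticKinetic {E : ℝ} (hβ : 0 < β) (ht : β * E ^ 2 + 2 * E ≤ t) :
    E ≤ relativisticKinetic β t := by
  have : 1 + β * E ≤ √(1 + β * t) := Real.le_sqrt_of_sq_le (by nlinarith)
  rw [relativisticKinetic_eq hβ, le_div_iff₀ hβ]
  linarith

variable {a b : ℝ}

theorem abs_min_sub_min_relativisticKinetic_le (hβ : 0 < β) (hb : 0 ≤ b) (ht : 0 ≤ t) :
    |min (t / 2 - a) 0 - min (relativisticKinetic β t - a - b) 0| ≤ β * t ^ 2 / 8 + b := by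
  have hle := relativisticKinetic_le_half hβ ht
  have hge := half_sub_relativisticKinetic_le hβ ht
  calc _ ≤ max |t / 2 - a - (relativisticKinetic β t - a - b)| |0 - 0| :=
        abs_min_sub_min_le_max _ _ _ _
    _ ≤ β * t ^ 2 / 8 + b := by
        rw [sub_self, abs_zero, max_eq_left (abs_nonneg _), abs_le]
        constructor <;> linarith

theorem min_sub_min_relativisticKinetic_eq_zero (hβ : 0 < β) (hb : 0 ≤ b)
    (ht : β * (a + b) ^ 2 + 2 * (a + b) ≤ t) :
    min (t / 2 - a) 0 - min (relativisticKinetic β t - a - b) 0 = 0 := by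
  have h₁ : 0 ≤ t / 2 - a := by nlinarith
  have h₂ : 0 ≤ relativisticKinetic β t - a - b := by
    linarith [le_relativisticKinetic hβ ht]
  rw [min_eq_right h₁, min_eq_right h₂, sub_self]

end relativisticKinetic

theorem integral_le_of_le_of_support_subset_closedBall {E : Type*} [NormedAddCommGroup E]
    [NormedSpace ℝ E] [FiniteDimensional ℝ E] [MeasurableSpace E] [BorelSpace E]
    (μ : Measure E) [μ.IsAddHaarMeasure] {f : E → ℝ} {R c : ℝ} (hR : 0 ≤ R)
    (hf₀ : ∀ x, 0 ≤ f x) (hfc : ∀ x, ‖x‖ ≤ R → f x ≤ c) (hf : ∀ x, R < ‖x‖ → f x = 0) :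
    ∫ x, f x ∂μ ≤ R ^ Module.finrank ℝ E * μ.real (ball 0 1) * c := by
  have hind : ∀ x, f x ≤ (closedBall 0 R).indicator (fun _ => c) x := by
    intro x
    by_cases hx : ‖x‖ ≤ R
    · rw [Set.indicator_of_mem (mem_closedBall_zero_iff.2 hx)]
      exact hfc x hx
    · rw [Set.indicator_of_notMem (by simpa using hx), hf x (not_le.1 hx)]
  have hint : Integrable ((closedBall (0 : E) R).indicator fun _ => c) μ :=
    (integrableOn_const measure_closedBall_lt_top.ne).integrable_indicator measurableSet_closedBall
  calc ∫ x, f x ∂μ ≤ ∫ x, (closedBall 0 R).indicator (fun _ => c) x ∂μ :=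
        integral_mono_of_nonneg (.of_forall hf₀) hint (.of_forall hind)
    _ = R ^ Module.finrank ℝ E * μ.real (ball 0 1) * c := by
        rw [integral_indicator_const c measurableSet_closedBall,
          Measure.addHaar_real_closedBall μ _ hR, smul_eq_mul]

/-- Comparison of the relativistic and non-relativistic semi-classical integrands:
`∫_{ℝ³} |[½|q|² − a]_- − [√(β⁻¹|q|² + β⁻²) − β⁻¹ − a − b]_-| dq
  ≤ C β (β(a+b)² + 2(a+b))^{7/2} + C b (β(a+b)² + 2(a+b))^{3/2}`. -/
theorem semiclassical_integrand_comparison :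
    ∃ C : ℝ, 0 < C ∧ ∀ β a b : ℝ, 0 < β → 0 < a → 0 < b →
      ∫ q : EuclideanSpace ℝ (Fin 3),
          |min (‖q‖ ^ 2 / 2 - a) 0
            - min (Real.sqrt (‖q‖ ^ 2 / β + 1 / β ^ 2) - 1 / β - a - b) 0|
        ≤ C * β * (β * (a + b) ^ 2 + 2 * (a + b)) ^ ((7 : ℝ) / 2)
          + C * b * (β * (a + b) ^ 2 + 2 * (a + b)) ^ ((3 : ℝ) / 2) := by
  set V := volume.real (ball (0 : EuclideanSpace ℝ (Fin 3)) 1)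
  have hV : 0 < V := ENNReal.toReal_pos (measure_ball_pos _ _ one_pos).ne' measure_ball_lt_top.ne
  refine ⟨V, hV, fun β a b hβ ha hb => ?_⟩
  set S := β * (a + b) ^ 2 + 2 * (a + b)
  have hS : 0 ≤ S := by positivity
  set R := √S
  have hRS : R ^ 2 = S := Real.sq_sqrt hS
  have hR : 0 ≤ R := Real.sqrt_nonneg S
  have hbound := integral_le_of_le_of_support_subset_closedBall volume hR
    (f := fun q : EuclideanSpace ℝ (Fin 3) =>
      |min (‖q‖ ^ 2 / 2 - a) 0 - min (relativisticKinetic β (‖q‖ ^ 2) - a - b) 0|)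
    (c := β * (R ^ 2) ^ 2 / 8 + b) (fun q => abs_nonneg _)
    (fun q hq => (abs_min_sub_min_relativisticKinetic_le hβ hb.le (sq_nonneg ‖q‖)).trans
      (by gcongr))
    (fun q hq => by
      rw [min_sub_min_relativisticKinetic_eq_zero hβ hb.le
        (by show S ≤ _; rw [← hRS]; gcongr), abs_zero])
  rw [finrank_euclideanSpace_fin] at hbound
  calc _ ≤ R ^ 3 * V * (β * (R ^ 2) ^ 2 / 8 + b) := hbound
    _ ≤ V * β * R ^ 7 + V * b * R ^ 3 := by
        have : 0 ≤ V * β * R ^ 7 := by positivity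
        nlinarith
    _ = _ := by
        rw [Real.rpow_div_two_eq_sqrt _ hS, Real.rpow_div_two_eq_sqrt _ hS]
        norm_num
        rfl
end
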